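/- Let f be a positive symplectic twist map of 𝕋^d×ℝ^d and let F be a lift of f. Then for every (m,n) ∈ ℤ^d×ℕ*, there is at most one Lipschitz Lagrangian (m,n)-periodic graph of F. -/

import Mathlib

/-!
A Lipschitz Lagrangian graph `γ` is the differential of a `C¹` potential `v`: the segment
integrals of `γ` are additive, because the Lagrangian condition applies to a `C¹`
parametrisation of any triangle.

Fix `b` and weight the chains `x₀, …, xₙ` with `xₙ = b + m` by the graph action
`v x₀ + ∑ S (xⱼ, xⱼ₊₁)`. Positivity and periodicity make `S` superlinear, so a minimizing chain
exists. Its Euler–Lagrange equations say that it is the projection of the orbit of `(x₀, γ x₀)`,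
and `(m, n)`-periodicity of the graph then forces `x₀ = b`: the orbit of `(b, γ b)` is the only
minimizer. For two such graphs, the orbits from `b` both end at `b + m`, and comparing the two
minimality statements shows that they have the same action. Hence the orbit for `γ₂` also
minimizes the action of `γ₁`, so its first step is the one of `γ₁`, and the twist condition
gives `γ₁ b = γ₂ b`.
-/

open Function Set Filter Topology MeasureTheory

noncomputable section

/-- `ℝ^d` with the Euclidean structure. -/
abbrev Ed (d : ℕ) := EuclideanSpace ℝ (Fin d)
/-- `ℂ^d`. -/
abbrev Cd (d : ℕ) := EuclideanSpace ℂ (Fin d)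

variable {d : ℕ}

/-- The real vector associated with an integer vector `m ∈ ℤ^d`. -/
def intVec (d : ℕ) (m : Fin d → ℤ) : Ed d := WithLp.toLp 2 (fun i => (m i : ℝ))

/-- The complex vector associated with an integer vector `m ∈ ℤ^d`. -/
def intVecC (d : ℕ) (m : Fin d → ℤ) : Cd d := WithLp.toLp 2 (fun i => (m i : ℂ))

/-- The canonical embedding `ℝ^d → ℂ^d`. -/
def complexify (q : Ed d) : Cd d := WithLp.toLp 2 (fun i => (q i : ℂ))

/-- The standard pairing `⟨p, v⟩ = ∑ i, p i * v i` on `ℝ^d`. -/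
def pairing (p v : Ed d) : ℝ := ∑ i, p i * v i

/-- The standard bilinear pairing on `ℂ^d`. -/
def pairingC (p v : Cd d) : ℂ := ∑ i, p i * v i

/-- `g` is a `C¹` diffeomorphism. -/
def IsC1Diffeo {X Y : Type*} [NormedAddCommGroup X] [NormedSpace ℝ X]
    [NormedAddCommGroup Y] [NormedSpace ℝ Y] (g : X → Y) : Prop :=
  ContDiff ℝ 1 g ∧ ∃ ginv : Y → X, ContDiff ℝ 1 ginv ∧
    Function.LeftInverse ginv g ∧ Function.RightInverse ginv g

/-- `g` is a holomorphic diffeomorphism. -/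
def IsHolDiffeo {X Y : Type*} [NormedAddCommGroup X] [NormedSpace ℂ X]
    [NormedAddCommGroup Y] [NormedSpace ℂ Y] (g : X → Y) : Prop :=
  Differentiable ℂ g ∧ ∃ ginv : Y → X, Differentiable ℂ ginv ∧
    Function.LeftInverse ginv g ∧ Function.RightInverse ginv g

/-- `F(q+m, p) = F(q, p) + (m, 0)` for all `m ∈ ℤ^d`: `F` is the lift of a map of
`𝕋^d × ℝ^d`. -/
def IsZdLift (F : Ed d × Ed d → Ed d × Ed d) : Prop :=
  ∀ (m : Fin d → ℤ) (q p : Ed d),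
    F (q + intVec d m, p) = ((F (q, p)).1 + intVec d m, (F (q, p)).2)

/-- `S` is a generating function for the lift `F`, i.e. `S(q+m, Q+m) = S(q, Q)` and
`P dQ - p dq = dS(q, Q)`; the latter means `∂₁S(q, Q(q,p)) = -p` and
`∂₂S(q, Q(q,p)) = P(q,p)`. -/
structure IsGenFun (F : Ed d × Ed d → Ed d × Ed d) (S : Ed d × Ed d → ℝ) : Prop where
  periodic : ∀ (m : Fin d → ℤ) (q Q : Ed d), S (q + intVec d m, Q + intVec d m) = S (q, Q)
  dq : ∀ q p v : Ed d, fderiv ℝ (fun q' => S (q', (F (q, p)).1)) q v = -(pairing p v)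
  dQ : ∀ q p v : Ed d, fderiv ℝ (fun Q' => S (q, Q')) (F (q, p)).1 v = pairing (F (q, p)).2 v

/-- `F : ℝ^d × ℝ^d → ℝ^d × ℝ^d` is a lift of a symplectic twist map of `𝕋^d × ℝ^d`
with generating function `S`. -/
structure IsSymplecticTwistLift (F : Ed d × Ed d → Ed d × Ed d)
    (S : Ed d × Ed d → ℝ) : Prop where
  diffeo : IsC1Diffeo F
  lift : IsZdLift F
  twist : IsC1Diffeo (fun x : Ed d × Ed d => (x.1, (F x).1))
  genfun : IsGenFun F S

/-- The mixed second derivative `∂²_{qQ} S (q,Q) (v, v)`. -/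
def mixedS (S : Ed d × Ed d → ℝ) (q Q v : Ed d) : ℝ :=
  fderiv ℝ (fun Q' => fderiv ℝ (fun q' => S (q', Q')) q v) Q v

/-- The symplectic twist map with `C²` generating function `S` is positive. -/
def PositiveGenFun (S : Ed d × Ed d → ℝ) : Prop :=
  ContDiff ℝ 2 S ∧ ∃ α : ℝ, 0 < α ∧ ∀ q Q v : Ed d, mixedS S q Q v ≤ -α * ‖v‖ ^ 2

/-- The symplectic twist map with `C²` generating function `S` is strongly positive. -/
def StronglyPositiveGenFun (S : Ed d × Ed d → ℝ) : Prop :=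
  ContDiff ℝ 2 S ∧ ∃ α β : ℝ, 0 < α ∧ 0 < β ∧
    ∀ q Q v : Ed d, -β * ‖v‖ ^ 2 ≤ mixedS S q Q v ∧ mixedS S q Q v ≤ -α * ‖v‖ ^ 2

/-- The second derivative `∂²_{qq} S (q, Q)` as a continuous bilinear map. -/
def hessqq (S : Ed d × Ed d → ℝ) (q Q : Ed d) : Ed d →L[ℝ] Ed d →L[ℝ] ℝ :=
  fderiv ℝ (fun q' => fderiv ℝ (fun q'' => S (q'', Q)) q') q

/-- The second derivative `∂²_{QQ} S (q, Q)` as a continuous bilinear map. -/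
def hessQQ (S : Ed d × Ed d → ℝ) (q Q : Ed d) : Ed d →L[ℝ] Ed d →L[ℝ] ℝ :=
  fderiv ℝ (fun Q' => fderiv ℝ (fun Q'' => S (q, Q'')) Q') Q

/-- The symplectic twist map with `C²` generating function `S` has bounded rate:
`‖∂²_{qq} S‖_∞ + ‖∂²_{QQ} S‖_∞ < ∞`. -/
def BoundedRateGenFun (S : Ed d × Ed d → ℝ) : Prop :=
  ContDiff ℝ 2 S ∧ ∃ C : ℝ, ∀ q Q : Ed d, ‖hessqq S q Q‖ + ‖hessQQ S q Q‖ ≤ C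

/-- `γ : ℝ^d → ℝ^d` is `ℤ^d`-periodic. -/
def ZdPeriodic (γ : Ed d → Ed d) : Prop :=
  ∀ (m : Fin d → ℤ) (q : Ed d), γ (q + intVec d m) = γ q

/-- A function `G : ℝ^d → ℝ` is `ℤ^d`-periodic, i.e. is a function on `𝕋^d`. -/
def ZdPeriodicFun (G : Ed d → ℝ) : Prop :=
  ∀ (m : Fin d → ℤ) (q : Ed d), G (q + intVec d m) = G q

/-- The graph of `γ` is Lagrangian: `∫₀¹ γ(ν(t))·ν'(t) dt = 0` for every `C¹` loop `ν`. -/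
def IsLagrangianGraph (γ : Ed d → Ed d) : Prop :=
  ∀ ν : ℝ → Ed d, ContDiff ℝ 1 ν → (∀ t : ℝ, ν (t + 1) = ν t) →
    ∫ t in (0:ℝ)..1, pairing (γ (ν t)) (deriv ν t) = 0

/-- The graph of `γ` is an `(m, n)`-periodic graph of `F`: `F^n(q, γ(q)) = (q+m, γ(q))`. -/
def IsPeriodicGraph (F : Ed d × Ed d → Ed d × Ed d) (m : Fin d → ℤ) (n : ℕ)
    (γ : Ed d → Ed d) : Prop :=
  ∀ q : Ed d, F^[n] (q, γ q) = (q + intVec d m, γ q)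

/-- `m ∈ ℤ^d` and `n ∈ ℕ` are coprime. -/
def CoprimeVec (m : Fin d → ℤ) (n : ℕ) : Prop :=
  Nat.gcd (Finset.univ.gcd fun i => (m i).natAbs) n = 1

/-- The graph of `γ`, as a subset of `ℝ^d × ℝ^d`. -/
def graphSet (γ : Ed d → Ed d) : Set (Ed d × Ed d) := {x : Ed d × Ed d | x.2 = γ x.1}

/-- `F` admits a Lipschitz Lagrangian `(m,n)`-periodic graph. -/
def HasLipLagPeriodicGraph (F : Ed d × Ed d → Ed d × Ed d) (m : Fin d → ℤ) (n : ℕ) : Prop :=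
  ∃ γ : Ed d → Ed d, (∃ K : NNReal, LipschitzWith K γ) ∧ ZdPeriodic γ ∧
    IsLagrangianGraph γ ∧ IsPeriodicGraph F m n γ

/-- The symplectic twist map lifted by `F` satisfies the analyticity property: there is a
holomorphic diffeomorphism of `ℂ^d × ℂ^d` extending `F`, satisfying the twist condition
and admitting a holomorphic generating function. -/
def SatisfiesAnalyticityProperty (F : Ed d × Ed d → Ed d × Ed d) : Prop :=
  ∃ Fc : Cd d × Cd d → Cd d × Cd d,
    IsHolDiffeo Fc ∧
    (∀ q p : Ed d, Fc (complexify q, complexify p)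
        = (complexify (F (q, p)).1, complexify (F (q, p)).2)) ∧
    IsHolDiffeo (fun x : Cd d × Cd d => (x.1, (Fc x).1)) ∧
    ∃ Sc : Cd d × Cd d → ℂ, Differentiable ℂ Sc ∧
      (∀ (m : Fin d → ℤ) (q Q : Cd d), Sc (q + intVecC d m, Q + intVecC d m) = Sc (q, Q)) ∧
      (∀ q p v : Cd d, fderiv ℂ (fun q' => Sc (q', (Fc (q, p)).1)) q v = -(pairingC p v)) ∧
      (∀ q p v : Cd d,
        fderiv ℂ (fun Q' => Sc (q, Q')) (Fc (q, p)).1 v = pairingC (Fc (q, p)).2 v)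

/-- `G : 𝕋^d → ℝ` admits a holomorphic extension to `ℂ^d`. -/
def HasHolomorphicExtension (G : Ed d → ℝ) : Prop :=
  ∃ Gc : Cd d → ℂ, Differentiable ℂ Gc ∧ ∀ q : Ed d, Gc (complexify q) = (G q : ℂ)

/-- `F` is the lift of a completely integrable map `f(q,p) = (q + ∇ℓ₀(p), p)` where
`ℓ₀` is `C²` and `∇ℓ₀` is a `C¹` diffeomorphism of `ℝ^d`. -/
def CompletelyIntegrableLift (F : Ed d × Ed d → Ed d × Ed d) : Prop :=
  ∃ (ℓ : Ed d → ℝ) (g : Ed d → Ed d), ContDiff ℝ 2 ℓ ∧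
    (∀ p v : Ed d, fderiv ℝ ℓ p v = pairing (g p) v) ∧
    IsC1Diffeo g ∧ ∀ q p : Ed d, F (q, p) = (q + g p, p)

/-- The `ν`-th Fourier coefficient of a `ℤ^d`-periodic function `G : ℝ^d → ℝ`. -/
def fourierCoeffT (G : Ed d → ℝ) (ν : Fin d → ℤ) : ℂ :=
  ∫ q in {q : Ed d | ∀ i, q i ∈ Set.Icc (0:ℝ) 1},
    (G q : ℂ) * Complex.exp (-(2 * Real.pi * Complex.I) * ∑ i, (ν i : ℂ) * (q i : ℂ))

/-- The sequence `(x_j)_{j ∈ ℤ}` is action-minimizing for the generating function `S`. -/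
def IsMinimizingSeq (S : Ed d × Ed d → ℝ) (x : ℤ → Ed d) : Prop :=
  ∀ (k : ℤ) (N : ℕ) (w : ℕ → Ed d), w 0 = x k → w N = x (k + N) →
    ∑ j ∈ Finset.range N, S (x (k + j), x (k + j + 1)) ≤
      ∑ j ∈ Finset.range N, S (w j, w (j + 1))

/-- `x : ℤ → ℝ^d × ℝ^d` is a full orbit of `F`. -/
def IsFullOrbit (F : Ed d × Ed d → Ed d × Ed d) (x : ℤ → Ed d × Ed d) : Prop :=
  ∀ j : ℤ, x (j + 1) = F (x j)

/-- The orbit of `a` under `F` is action-minimizing (its projection is a minimizing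
sequence). -/
def OrbitMinimizing (F : Ed d × Ed d → Ed d × Ed d) (S : Ed d × Ed d → ℝ)
    (a : Ed d × Ed d) : Prop :=
  ∃ x : ℤ → Ed d × Ed d, x 0 = a ∧ IsFullOrbit F x ∧ IsMinimizingSeq S fun j => (x j).1

/-- The superlinearity condition `S(q,Q)/‖Q-q‖ → ∞` as `‖Q-q‖ → ∞`. -/
def SuperlinearGenFun (S : Ed d × Ed d → ℝ) : Prop :=
  ∀ A : ℝ, ∃ R : ℝ, ∀ q Q : Ed d, R ≤ ‖Q - q‖ → A * ‖Q - q‖ ≤ S (q, Q)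

/-- The determinant of `∂_p (π₁ ∘ F^n) (q, p)`. -/
def twistDet (F : Ed d × Ed d → Ed d × Ed d) (n : ℕ) (q p : Ed d) : ℝ :=
  LinearMap.det ((fderiv ℝ (fun p' => (F^[n] (q, p')).1) p : Ed d →L[ℝ] Ed d)
    : Ed d →ₗ[ℝ] Ed d)

/-- The set `A ⊆ ℝ` is infinite with points accumulating to `0`. -/
def InfiniteAccumulatingAtZero (A : Set ℝ) : Prop :=
  A.Infinite ∧ ∀ δ : ℝ, 0 < δ → ∃ ε ∈ A, ε ≠ 0 ∧ |ε| < δ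

open RealInnerProductSpace

theorem pairing_eq_inner (p v : Ed d) : pairing p v = ⟪p, v⟫ := by
  simp [pairing, PiLp.inner_apply, mul_comm]

theorem exists_norm_le_of_periodic {X : Type*} [SeminormedAddCommGroup X] {f : Ed d → X}
    (hf : Continuous f) (hper : ∀ (m : Fin d → ℤ) (q : Ed d), f (q + intVec d m) = f q) :
    ∃ C, ∀ q, ‖f q‖ ≤ C := by
  have hcube : IsCompact (WithLp.toLp 2 '' univ.pi fun _ : Fin d => Icc (0 : ℝ) 1) :=
    (isCompact_univ_pi fun _ => isCompact_Icc).image (PiLp.continuous_toLp 2 _)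
  obtain ⟨C, hC⟩ := hcube.exists_bound_of_continuousOn hf.continuousOn
  refine ⟨C, fun q => ?_⟩
  have hq : q = WithLp.toLp 2 (fun i => Int.fract (q i)) + intVec d fun i => ⌊q i⌋ := by
    ext i
    simp [intVec]
  rw [hq, hper]
  exact hC _ ⟨_, fun i _ => ⟨Int.fract_nonneg _, (Int.fract_lt_one _).le⟩, rfl⟩

theorem IsC1Diffeo.bijective {X Y : Type*} [NormedAddCommGroup X] [NormedSpace ℝ X]
    [NormedAddCommGroup Y] [NormedSpace ℝ Y] {g : X → Y} (hg : IsC1Diffeo g) : Bijective g :=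
  let ⟨_, _, _, hl, hr⟩ := hg
  ⟨hl.injective, hr.surjective⟩

namespace IsSymplecticTwistLift

variable {F : Ed d × Ed d → Ed d × Ed d} {S : Ed d × Ed d → ℝ}

theorem exists_fst_eq (hFS : IsSymplecticTwistLift F S) (q Q : Ed d) :
    ∃ p, (F (q, p)).1 = Q := by
  obtain ⟨⟨q', p⟩, h⟩ := hFS.twist.bijective.surjective (q, Q)
  obtain ⟨rfl, hQ⟩ := Prod.mk.inj h
  exact ⟨p, hQ⟩

theorem eq_of_fst_eq (hFS : IsSymplecticTwistLift F S) {q p p' : Ed d}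
    (h : (F (q, p)).1 = (F (q, p')).1) : p = p' :=
  congrArg Prod.snd <|
    hFS.twist.bijective.injective (a₁ := (q, p)) (a₂ := (q, p')) (Prod.ext rfl h)

end IsSymplecticTwistLift

theorem deriv_eq_zero_of_eqOn_Iic {f : ℝ → ℝ} {x c : ℝ} (hf : DifferentiableAt ℝ f x)
    (h : EqOn f (fun _ => c) (Iic x)) : deriv f x = 0 := by
  rw [← hf.derivWithin (uniqueDiffWithinAt_Iic x), derivWithin_congr h (h self_mem_Iic),
    derivWithin_fun_const, Pi.zero_apply]

theorem deriv_eq_zero_of_eqOn_Ici {f : ℝ → ℝ} {x c : ℝ} (hf : DifferentiableAt ℝ f x)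
    (h : EqOn f (fun _ => c) (Ici x)) : deriv f x = 0 := by
  rw [← hf.derivWithin (uniqueDiffWithinAt_Ici x), derivWithin_congr h (h self_mem_Ici),
    derivWithin_fun_const, Pi.zero_apply]

section PeriodicExtension

theorem comp_fract_eq_of_mem_Ioo {E : Type*} [Zero E] {f : ℝ → E} {a : ℝ}
    (h0 : ∀ t ≤ 0, f t = 0) (ha : ∀ t, a ≤ t → f t = 0) {k : ℤ} {t : ℝ}
    (ht : t ∈ Ioo (k + a - 1) (k + 1)) : f (Int.fract t) = f (t - k) := by
  rcases lt_or_ge t k with htk | htk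
  · have hfloor : (⌊t⌋ : ℝ) ≤ k - 1 := by
      exact_mod_cast Int.le_sub_one_of_lt (Int.floor_lt.2 htk)
    rw [ha _ (by rw [← Int.self_sub_floor]; linarith [ht.1]), h0 _ (by linarith)]
  · rw [← Int.self_sub_floor, Int.floor_eq_iff.2 ⟨htk, ht.2⟩]

variable {E : Type*} [NormedAddCommGroup E] [NormedSpace ℝ E] {f : ℝ → E} {a : ℝ}

theorem ContDiff.comp_fract {n : WithTop ℕ∞} (hf : ContDiff ℝ n f) (h0 : ∀ t ≤ 0, f t = 0)
    (ha : ∀ t, a ≤ t → f t = 0) (ha1 : a < 1) : ContDiff ℝ n fun t => f (Int.fract t) := by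
  refine contDiff_iff_contDiffAt.2 fun t₀ => ?_
  have hmem : t₀ ∈ Ioo ((⌊t₀⌋ : ℝ) + a - 1) (⌊t₀⌋ + 1) :=
    ⟨by linarith [Int.floor_le t₀], Int.lt_floor_add_one t₀⟩
  exact (hf.comp (contDiff_id.sub contDiff_const)).contDiffAt.congr_of_eventuallyEq
    (eventually_of_mem (isOpen_Ioo.mem_nhds hmem) fun _ ht => comp_fract_eq_of_mem_Ioo h0 ha ht)

theorem integral_comp_fract {G : Type*} [NormedAddCommGroup G] [NormedSpace ℝ G]
    (h0 : ∀ t ≤ 0, f t = 0) (ha : ∀ t, a ≤ t → f t = 0) (ha1 : a < 1) (Φ : E → E → G) :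
    ∫ t in (0 : ℝ)..1, Φ (f (Int.fract t)) (deriv (fun s => f (Int.fract s)) t) =
      ∫ t in (0 : ℝ)..1, Φ (f t) (deriv f t) := by
  refine intervalIntegral.integral_congr_ae ?_
  filter_upwards [Measure.ae_ne volume 1] with t ht1 ht
  rw [uIoc_of_le zero_le_one] at ht
  have hloc : (fun s => f (Int.fract s)) =ᶠ[𝓝 t] f := by
    have hmem : t ∈ Ioo (((0 : ℤ) : ℝ) + a - 1) ((0 : ℤ) + 1) :=
      ⟨by push_cast; linarith [ht.1], by push_cast; linarith [lt_of_le_of_ne ht.2 ht1]⟩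
    filter_upwards [isOpen_Ioo.mem_nhds hmem] with s hs
    simpa using comp_fract_eq_of_mem_Ioo h0 ha hs
  rw [hloc.eq_of_nhds, hloc.deriv_eq]

end PeriodicExtension

def smoothStep (i t : ℝ) : ℝ := Real.smoothTransition (4 * t - i)

theorem contDiff_smoothStep {n : ℕ∞} (i : ℝ) : ContDiff ℝ n (smoothStep i) :=
  Real.smoothTransition.contDiff.comp ((contDiff_const.mul contDiff_id).sub contDiff_const)

theorem smoothStep_of_le {i t : ℝ} (h : t ≤ i / 4) : smoothStep i t = 0 :=
  Real.smoothTransition.zero_of_nonpos (by linarith)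

theorem smoothStep_of_ge {i t : ℝ} (h : (i + 1) / 4 ≤ t) : smoothStep i t = 1 :=
  Real.smoothTransition.one_of_one_le (by linarith)

theorem deriv_smoothStep_of_le {i t : ℝ} (h : t ≤ i / 4) : deriv (smoothStep i) t = 0 :=
  deriv_eq_zero_of_eqOn_Iic ((contDiff_smoothStep (n := 1) i).differentiable one_ne_zero t)
    fun _ hs => smoothStep_of_le (le_trans hs h)

theorem deriv_smoothStep_of_ge {i t : ℝ} (h : (i + 1) / 4 ≤ t) : deriv (smoothStep i) t = 0 :=
  deriv_eq_zero_of_eqOn_Ici ((contDiff_smoothStep (n := 1) i).differentiable one_ne_zero t)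
    fun _ hs => smoothStep_of_ge (le_trans h hs)

-- Runs along the triangle `0 → u → w → 0` during `[0, 3/4]`, at rest at each vertex, and
-- vanishes outside `[0, 3/4]`.
def triangleLoop (u w : Ed d) (t : ℝ) : Ed d :=
  smoothStep 0 t • u + smoothStep 1 t • (w - u) - smoothStep 2 t • w

theorem contDiff_triangleLoop (u w : Ed d) : ContDiff ℝ 1 (triangleLoop u w) :=
  (((contDiff_smoothStep 0).smul contDiff_const).add
    ((contDiff_smoothStep 1).smul contDiff_const)).sub
    ((contDiff_smoothStep 2).smul contDiff_const)

theorem triangleLoop_of_nonpos (u w : Ed d) {t : ℝ} (ht : t ≤ 0) : triangleLoop u w t = 0 := by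
  simp [triangleLoop, smoothStep_of_le (i := 0) (by linarith : t ≤ 0 / 4),
    smoothStep_of_le (i := 1) (by linarith : t ≤ 1 / 4),
    smoothStep_of_le (i := 2) (by linarith : t ≤ 2 / 4)]

theorem triangleLoop_of_ge (u w : Ed d) {t : ℝ} (ht : 3 / 4 ≤ t) : triangleLoop u w t = 0 := by
  simp [triangleLoop, smoothStep_of_ge (i := 0) (by linarith : (0 + 1) / 4 ≤ t),
    smoothStep_of_ge (i := 1) (by linarith : (1 + 1) / 4 ≤ t),
    smoothStep_of_ge (i := 2) (by linarith : (2 + 1) / 4 ≤ t)]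

theorem deriv_triangleLoop (u w : Ed d) (t : ℝ) :
    deriv (triangleLoop u w) t = deriv (smoothStep 0) t • u + deriv (smoothStep 1) t • (w - u) -
      deriv (smoothStep 2) t • w := by
  have h (i : ℝ) : HasDerivAt (smoothStep i) (deriv (smoothStep i) t) t :=
    ((contDiff_smoothStep (n := 1) i).differentiable one_ne_zero t).hasDerivAt
  exact ((((h 0).smul_const u).add ((h 1).smul_const (w - u))).sub ((h 2).smul_const w)).deriv

def segmentIntegral (γ : Ed d → Ed d) (a b : Ed d) : ℝ :=
  ∫ s in (0 : ℝ)..1, ⟪γ (a + s • (b - a)), b - a⟫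

theorem segmentIntegral_swap (γ : Ed d → Ed d) (a b : Ed d) :
    segmentIntegral γ b a = -segmentIntegral γ a b := by
  have h (s : ℝ) : ⟪γ (b + s • (a - b)), a - b⟫ = -⟪γ (a + (1 - s) • (b - a)), b - a⟫ := by
    rw [← inner_neg_right, neg_sub]
    congr 2
    module
  simp only [segmentIntegral, h, intervalIntegral.integral_neg,
    intervalIntegral.integral_comp_sub_left (fun s => ⟪γ (a + s • (b - a)), b - a⟫)]
  norm_num

theorem integral_inner_eq_segmentIntegral {γ : Ed d → Ed d} (hγ : Continuous γ) {φ : ℝ → ℝ}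
    (hφ : ContDiff ℝ 1 φ) {a b : ℝ} (ha : φ a = 0) (hb : φ b = 1) (P e : Ed d)
    {ν ν' : ℝ → Ed d} (hν : ∀ t ∈ uIcc a b, ν t = P + φ t • e)
    (hν' : ∀ t ∈ uIcc a b, ν' t = deriv φ t • e) :
    ∫ t in a..b, ⟪γ (ν t), ν' t⟫ = segmentIntegral γ P (P + e) := by
  calc ∫ t in a..b, ⟪γ (ν t), ν' t⟫
      = ∫ t in a..b, deriv φ t • ((fun s => ⟪γ (P + s • e), e⟫) ∘ φ) t :=
        intervalIntegral.integral_congr fun t ht => by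
          simp [hν t ht, hν' t ht, inner_smul_right]
    _ = ∫ s in φ a..φ b, ⟪γ (P + s • e), e⟫ :=
        intervalIntegral.integral_deriv_smul_comp
          (fun t _ => (hφ.differentiable one_ne_zero t).hasDerivAt)
          (hφ.continuous_deriv le_rfl).continuousOn (by fun_prop)
    _ = segmentIntegral γ P (P + e) := by simp [segmentIntegral, ha, hb]

theorem integral_triangleLoop_piece {γ : Ed d → Ed d} (hγ : Continuous γ) (u w : Ed d)
    (i : ℝ) (P e : Ed d)
    (h : ∀ t ∈ Icc (i / 4) ((i + 1) / 4), triangleLoop u w t = P + smoothStep i t • e ∧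
      deriv (triangleLoop u w) t = deriv (smoothStep i) t • e) :
    ∫ t in i / 4..(i + 1) / 4, ⟪γ (triangleLoop u w t), deriv (triangleLoop u w) t⟫ =
      segmentIntegral γ P (P + e) := by
  have hi : i / 4 ≤ (i + 1) / 4 := by linarith
  exact integral_inner_eq_segmentIntegral hγ (contDiff_smoothStep i) (smoothStep_of_le le_rfl)
    (smoothStep_of_ge le_rfl) P e (fun t ht => (h t (uIcc_of_le hi ▸ ht)).1)
    (fun t ht => (h t (uIcc_of_le hi ▸ ht)).2)

theorem integral_triangleLoop {γ : Ed d → Ed d} (hγ : Continuous γ) (u w : Ed d) :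
    ∫ t in (0 : ℝ)..1, ⟪γ (triangleLoop u w t), deriv (triangleLoop u w) t⟫ =
      segmentIntegral γ 0 u + segmentIntegral γ u w + segmentIntegral γ w 0 := by
  have hint (a b : ℝ) : IntervalIntegrable
      (fun t => ⟪γ (triangleLoop u w t), deriv (triangleLoop u w) t⟫) volume a b :=
    ((hγ.comp (contDiff_triangleLoop u w).continuous).inner
      ((contDiff_triangleLoop u w).continuous_deriv le_rfl)).intervalIntegrable a b
  have first := integral_triangleLoop_piece hγ u w 0 0 u fun t ht => by
    simp [triangleLoop, deriv_triangleLoop,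
      smoothStep_of_le (i := 1) (by linarith [ht.2] : t ≤ 1 / 4),
      smoothStep_of_le (i := 2) (by linarith [ht.2] : t ≤ 2 / 4),
      deriv_smoothStep_of_le (i := 1) (by linarith [ht.2] : t ≤ 1 / 4),
      deriv_smoothStep_of_le (i := 2) (by linarith [ht.2] : t ≤ 2 / 4)]
  have second := integral_triangleLoop_piece hγ u w 1 u (w - u) fun t ht => by
    simp [triangleLoop, deriv_triangleLoop,
      smoothStep_of_ge (i := 0) (by linarith [ht.1] : (0 + 1) / 4 ≤ t),
      smoothStep_of_le (i := 2) (by linarith [ht.2] : t ≤ 2 / 4),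
      deriv_smoothStep_of_ge (i := 0) (by linarith [ht.1] : (0 + 1) / 4 ≤ t),
      deriv_smoothStep_of_le (i := 2) (by linarith [ht.2] : t ≤ 2 / 4)]
  have third := integral_triangleLoop_piece hγ u w 2 w (-w) fun t ht => by
    simp only [triangleLoop, deriv_triangleLoop,
      smoothStep_of_ge (i := 0) (by linarith [ht.1] : (0 + 1) / 4 ≤ t),
      smoothStep_of_ge (i := 1) (by linarith [ht.1] : (1 + 1) / 4 ≤ t),
      deriv_smoothStep_of_ge (i := 0) (by linarith [ht.1] : (0 + 1) / 4 ≤ t),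
      deriv_smoothStep_of_ge (i := 1) (by linarith [ht.1] : (1 + 1) / 4 ≤ t)]
    constructor <;> module
  have rest : ∫ t in (3 / 4 : ℝ)..1,
      ⟪γ (triangleLoop u w t), deriv (triangleLoop u w) t⟫ = 0 := by
    refine (intervalIntegral.integral_congr fun t ht => ?_).trans intervalIntegral.integral_zero
    rw [uIcc_of_le (by norm_num)] at ht
    simp [deriv_triangleLoop,
      deriv_smoothStep_of_ge (i := 0) (by linarith [ht.1] : (0 + 1) / 4 ≤ t),
      deriv_smoothStep_of_ge (i := 1) (by linarith [ht.1] : (1 + 1) / 4 ≤ t),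
      deriv_smoothStep_of_ge (i := 2) (by linarith [ht.1] : (2 + 1) / 4 ≤ t)]
  norm_num at first second third
  rw [← intervalIntegral.integral_add_adjacent_intervals (hint 0 (1 / 4)) (hint (1 / 4) 1),
    ← intervalIntegral.integral_add_adjacent_intervals (hint (1 / 4) (1 / 2)) (hint (1 / 2) 1),
    ← intervalIntegral.integral_add_adjacent_intervals (hint (1 / 2) (3 / 4)) (hint (3 / 4) 1),
    first, second, third, rest, add_zero, add_assoc]

theorem IsLagrangianGraph.segmentIntegral_add {γ : Ed d → Ed d} (hLag : IsLagrangianGraph γ)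
    (hγ : Continuous γ) (u w : Ed d) :
    segmentIntegral γ 0 u + segmentIntegral γ u w = segmentIntegral γ 0 w := by
  have h0 : ∀ t ≤ 0, triangleLoop u w t = 0 := fun _ => triangleLoop_of_nonpos u w
  have h1 : ∀ t, 3 / 4 ≤ t → triangleLoop u w t = 0 := fun _ => triangleLoop_of_ge u w
  have h := hLag _ ((contDiff_triangleLoop u w).comp_fract h0 h1 (by norm_num))
    fun t => by rw [Int.fract_add_one]
  simp only [pairing_eq_inner] at h
  rw [integral_comp_fract h0 h1 (by norm_num) fun x y => ⟪γ x, y⟫, integral_triangleLoop hγ,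
    segmentIntegral_swap γ 0 w] at h
  linarith

def potential (γ : Ed d → Ed d) (q : Ed d) : ℝ := segmentIntegral γ 0 q

theorem IsLagrangianGraph.hasFDerivAt_potential {γ : Ed d → Ed d} (hLag : IsLagrangianGraph γ)
    (hγ : Continuous γ) (q : Ed d) : HasFDerivAt (potential γ) (innerSL ℝ (γ q)) q := by
  rw [hasFDerivAt_iff_isLittleO_nhds_zero, Asymptotics.isLittleO_iff]
  intro ε hε
  obtain ⟨δ, hδ, hγδ⟩ := Metric.continuousAt_iff.mp (hγ.continuousAt (x := q)) ε hε
  filter_upwards [Metric.ball_mem_nhds 0 hδ] with h hh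
  have hint : IntervalIntegrable (fun s : ℝ => ⟪γ (q + s • h), h⟫) volume 0 1 :=
    Continuous.intervalIntegrable (by fun_prop) 0 1
  have hdiff : potential γ (q + h) - potential γ q - innerSL ℝ (γ q) h =
      ∫ s in (0 : ℝ)..1, ⟪γ (q + s • h) - γ q, h⟫ := by
    rw [potential, potential, ← hLag.segmentIntegral_add hγ q (q + h), add_sub_cancel_left,
      segmentIntegral]
    simp [inner_sub_left, intervalIntegral.integral_sub hint intervalIntegrable_const]
  have hbound : ∀ s ∈ uIoc (0 : ℝ) 1, ‖⟪γ (q + s • h) - γ q, h⟫‖ ≤ ε * ‖h‖ := by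
    intro s hs
    rw [uIoc_of_le zero_le_one] at hs
    have hclose : dist (q + s • h) q < δ := by
      rw [dist_eq_norm, add_sub_cancel_left, norm_smul, Real.norm_eq_abs, abs_of_pos hs.1]
      have : ‖h‖ < δ := by simpa using hh
      nlinarith [norm_nonneg h, hs.2]
    calc ‖⟪γ (q + s • h) - γ q, h⟫‖ ≤ ‖γ (q + s • h) - γ q‖ * ‖h‖ := norm_inner_le_norm _ _
      _ ≤ ε * ‖h‖ := by
        gcongr
        rw [← dist_eq_norm]
        exact (hγδ hclose).le
  rw [hdiff]
  simpa using intervalIntegral.norm_integral_le_of_norm_le_const hbound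

theorem lipschitzWith_potential {γ : Ed d → Ed d} (hLag : IsLagrangianGraph γ)
    (hγ : Continuous γ) {K : NNReal} (hK : ∀ q, ‖γ q‖₊ ≤ K) : LipschitzWith K (potential γ) := by
  have hderiv q := hLag.hasFDerivAt_potential hγ q
  refine lipschitzWith_of_nnnorm_fderiv_le (fun q => (hderiv q).differentiableAt) fun q => ?_
  rw [(hderiv q).fderiv, ← NNReal.coe_le_coe, coe_nnnorm, innerSL_apply_norm]
  exact hK q

section GeneratingFunction

variable {S : Ed d × Ed d → ℝ}

theorem fderiv_partial_fst_apply (hS : Differentiable ℝ S) (q Q v : Ed d) :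
    fderiv ℝ (fun q' => S (q', Q)) q v = fderiv ℝ S (q, Q) (v, 0) := by
  have h : HasFDerivAt (fun q' => S (q', Q)) ((fderiv ℝ S (q, Q)).comp (.inl ℝ _ _)) q :=
    (hS (q, Q)).hasFDerivAt.comp q (hasFDerivAt_prodMk_left q Q)
  simp [h.fderiv]

theorem hasDerivAt_fderiv_fst_line (hS : ContDiff ℝ 2 S) (x Y w : Ed d) (r : ℝ) :
    HasDerivAt (fun r : ℝ => fderiv ℝ (fun q' => S (q', Y + r • w)) x w)
      (mixedS S x (Y + r • w) w) r := by
  have hΦ : Differentiable ℝ fun Q => fderiv ℝ (fun q' => S (q', Q)) x w := by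
    simp_rw [fderiv_partial_fst_apply (hS.differentiable two_ne_zero)]
    have hD : Differentiable ℝ fun Q : Ed d => fderiv ℝ S (x, Q) :=
      ((hS.fderiv_right one_add_one_eq_two.le).differentiable one_ne_zero).comp
        ((differentiable_const x).prodMk differentiable_id)
    exact fun Q => (hD Q).clm_apply (differentiableAt_const _)
  have hline : HasDerivAt (fun r : ℝ => Y + r • w) w r := by
    simpa using ((hasDerivAt_id r).smul_const w).const_add Y
  exact (hΦ _).hasFDerivAt.comp_hasDerivAt r hline

theorem fderiv_fst_line_sub_le (hS : ContDiff ℝ 2 S) {α : ℝ}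
    (hα : ∀ q Q v : Ed d, mixedS S q Q v ≤ -α * ‖v‖ ^ 2) (x Y w : Ed d) {t : ℝ} (ht : 0 ≤ t) :
    fderiv ℝ (fun q' => S (q', Y + t • w)) x w - fderiv ℝ (fun q' => S (q', Y)) x w ≤
      -α * ‖w‖ ^ 2 * t := by
  have hd := hasDerivAt_fderiv_fst_line hS x Y w
  have := image_sub_le_mul_sub_of_deriv_le (fun r => (hd r).differentiableAt)
    (fun r => (hd r).deriv ▸ hα _ _ _) ht
  simpa using this

theorem sq_lower_bound_of_mixedS_le (hS : ContDiff ℝ 2 S) {α : ℝ}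
    (hα : ∀ q Q v : Ed d, mixedS S q Q v ≤ -α * ‖v‖ ^ 2) {M : ℝ}
    (hM : ∀ y v : Ed d, fderiv ℝ (fun q' => S (q', y)) y v ≤ M * ‖v‖) (a b : Ed d) :
    S (b, b) - M * ‖b - a‖ + α / 2 * ‖b - a‖ ^ 2 ≤ S (a, b) := by
  set w := b - a
  -- On `[0, 1]` the slope of `s ↦ S (a + s • w, b)` is at most `M ‖w‖ - α ‖w‖ ^ 2 * (1 - s)`:
  -- with `x = a + s • w` we have `b = x + (1 - s) • w`, so positivity compares `∂_q S (x, b) w`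
  -- with its value at the diagonal point `(x, x)`, where `hM` bounds it.
  have hg (s : ℝ) : HasDerivAt (fun s : ℝ => S (a + s • w, b))
      (fderiv ℝ (fun q' => S (q', b)) (a + s • w) w) s := by
    have hline : HasDerivAt (fun s : ℝ => a + s • w) w s := by
      simpa using ((hasDerivAt_id s).smul_const w).const_add a
    exact (((hS.differentiable two_ne_zero).comp (differentiable_id.prodMk
      (differentiable_const b))) _).hasFDerivAt.comp_hasDerivAt s hline
  have hg' (s : ℝ) (hs : s ≤ 1) :
      fderiv ℝ (fun q' => S (q', b)) (a + s • w) w ≤ M * ‖w‖ - α * ‖w‖ ^ 2 * (1 - s) := by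
    have hb : a + s • w + (1 - s) • w = b := by simp only [w]; module
    have := fderiv_fst_line_sub_le hS hα (a + s • w) (a + s • w) w (sub_nonneg.2 hs)
    rw [hb] at this
    linarith [hM (a + s • w) w]
  have hh (s : ℝ) : HasDerivAt
      (fun s => S (a + s • w, b) + (α * ‖w‖ ^ 2 * (s - s ^ 2 / 2) - M * ‖w‖ * s))
      (fderiv ℝ (fun q' => S (q', b)) (a + s • w) w + (α * ‖w‖ ^ 2 * (1 - s) - M * ‖w‖)) s := by
    refine (hg s).fun_add ((((hasDerivAt_id' s).fun_sub
      ((hasDerivAt_pow 2 s).div_const 2)).const_mul _).fun_sub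
      ((hasDerivAt_id' s).const_mul _) |>.congr_deriv ?_)
    norm_num
  have hanti := antitoneOn_of_deriv_nonpos (convex_Icc (0 : ℝ) 1)
    (fun s _ => (hh s).continuousAt.continuousWithinAt)
    (fun s _ => (hh s).differentiableAt.differentiableWithinAt)
    (fun s hs => by
      rw [(hh s).deriv]
      rw [interior_Icc] at hs
      linarith [hg' s hs.2.le])
    (left_mem_Icc.2 zero_le_one) (right_mem_Icc.2 zero_le_one) zero_le_one
  simp only [w] at hanti
  norm_num at hanti
  linarith

theorem fderiv_diag_periodic
    (hper : ∀ (m : Fin d → ℤ) (q Q : Ed d), S (q + intVec d m, Q + intVec d m) = S (q, Q))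
    (m : Fin d → ℤ) (y : Ed d) :
    fderiv ℝ S (y + intVec d m, y + intVec d m) = fderiv ℝ S (y, y) := by
  have h : (fun p : Ed d × Ed d => S (p + (intVec d m, intVec d m))) = S :=
    funext fun p => hper m p.1 p.2
  calc fderiv ℝ S (y + intVec d m, y + intVec d m)
      = fderiv ℝ (fun p => S (p + (intVec d m, intVec d m))) (y, y) :=
        (fderiv_comp_add_right (x := (y, y)) (intVec d m, intVec d m)).symm
    _ = fderiv ℝ S (y, y) := by rw [h]

theorem PositiveGenFun.superlinear (hpos : PositiveGenFun S)
    (hper : ∀ (m : Fin d → ℤ) (q Q : Ed d), S (q + intVec d m, Q + intVec d m) = S (q, Q))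
    (A : ℝ) : ∃ C, ∀ a b : Ed d, A * ‖b - a‖ - C ≤ S (a, b) := by
  obtain ⟨hS, α, hα0, hα⟩ := hpos
  obtain ⟨C₀, hC₀⟩ := exists_norm_le_of_periodic (f := fun y : Ed d => S (y, y))
    (by fun_prop) fun m y => hper m y y
  obtain ⟨M, hM⟩ := exists_norm_le_of_periodic (f := fun y : Ed d => fderiv ℝ S (y, y))
    ((hS.continuous_fderiv two_ne_zero).comp (by fun_prop)) (fderiv_diag_periodic hper)
  have hMd (y v : Ed d) : fderiv ℝ (fun q' => S (q', y)) y v ≤ M * ‖v‖ := by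
    rw [fderiv_partial_fst_apply (hS.differentiable two_ne_zero)]
    refine (le_abs_self _).trans ((fderiv ℝ S (y, y)).le_opNorm _ |>.trans ?_)
    rw [Prod.norm_mk, norm_zero, max_eq_left (norm_nonneg v)]
    gcongr
    exact hM y
  refine ⟨C₀ + (M + A) ^ 2 / (2 * α), fun a b => ?_⟩
  have hsq := sq_lower_bound_of_mixedS_le hS hα hMd a b
  have hdiag := neg_le_of_abs_le (hC₀ b)
  have hsquare : 0 ≤ (α * ‖b - a‖ - (M + A)) ^ 2 / (2 * α) := by positivity
  have hexpand : (α * ‖b - a‖ - (M + A)) ^ 2 / (2 * α) =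
      α / 2 * ‖b - a‖ ^ 2 - (M + A) * ‖b - a‖ + (M + A) ^ 2 / (2 * α) := by
    field_simp
    ring
  linarith

end GeneratingFunction

section Chains

variable {α : Type*}

def chainAction (S : α × α → ℝ) (n : ℕ) (c : ℕ → α) : ℝ :=
  ∑ j ∈ Finset.range n, S (c j, c (j + 1))

def graphAction (v : α → ℝ) (S : α × α → ℝ) (n : ℕ) (c : ℕ → α) : ℝ :=
  v (c 0) + chainAction S n c

def IsMinimalChain (v : α → ℝ) (S : α × α → ℝ) (n : ℕ) (c : ℕ → α) : Prop :=
  ∀ c' : ℕ → α, c' n = c n → graphAction v S n c ≤ graphAction v S n c'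

variable {v : α → ℝ} {S : α × α → ℝ} {n : ℕ}

theorem graphAction_congr {c c' : ℕ → α} (h : ∀ j ≤ n, c j = c' j) :
    graphAction v S n c = graphAction v S n c' := by
  rw [graphAction, graphAction, h 0 n.zero_le, chainAction, chainAction]
  refine congrArg _ (Finset.sum_congr rfl fun j hj => ?_)
  have := Finset.mem_range.1 hj
  rw [h j (by omega), h (j + 1) (by omega)]

theorem chainAction_update_zero (hn : 0 < n) (c : ℕ → α) (x : α) :
    chainAction S n (update c 0 x) = chainAction S n c - S (c 0, c 1) + S (x, c 1) := by
  have key : chainAction S n (update c 0 x) - chainAction S n c = S (x, c 1) - S (c 0, c 1) := by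
    rw [chainAction, chainAction, ← Finset.sum_sub_distrib,
      Finset.sum_eq_single_of_mem 0 (Finset.mem_range.2 hn)]
    · simp
    · intro j _ hj
      simp [update_of_ne hj]
  linarith

theorem chainAction_update_succ {k : ℕ} (hk : k + 1 < n) (c : ℕ → α) (x : α) :
    chainAction S n (update c (k + 1) x) = chainAction S n c - S (c k, c (k + 1)) -
      S (c (k + 1), c (k + 2)) + S (c k, x) + S (x, c (k + 2)) := by
  have key : chainAction S n (update c (k + 1) x) - chainAction S n c =
      (S (c k, x) - S (c k, c (k + 1))) + (S (x, c (k + 2)) - S (c (k + 1), c (k + 2))) := by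
    rw [chainAction, chainAction, ← Finset.sum_sub_distrib, Finset.sum_eq_add_of_mem k (k + 1)
      (Finset.mem_range.2 (by omega)) (Finset.mem_range.2 hk) (by omega)]
    · simp
    · intro j _ hj
      simp [update_of_ne (show j ≠ k + 1 by omega), update_of_ne (show j + 1 ≠ k + 1 by omega)]
  linarith

theorem IsMinimalChain.isLocalMin_zero {c : ℕ → α} [TopologicalSpace α]
    (hc : IsMinimalChain v S n c) (hn : 0 < n) : IsLocalMin (fun x => v x + S (x, c 1)) (c 0) :=
  Eventually.of_forall fun x => by
    have := hc (update c 0 x) (update_of_ne hn.ne' x c)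
    simp only [graphAction, chainAction_update_zero hn, update_self] at this
    linarith

theorem IsMinimalChain.isLocalMin_succ {c : ℕ → α} [TopologicalSpace α]
    (hc : IsMinimalChain v S n c) {k : ℕ} (hk : k + 1 < n) :
    IsLocalMin (fun x => S (c k, x) + S (x, c (k + 2))) (c (k + 1)) :=
  Eventually.of_forall fun x => by
    have := hc (update c (k + 1) x) (update_of_ne (by omega) x c)
    simp only [graphAction, chainAction_update_succ hk,
      update_of_ne (Nat.succ_ne_zero k).symm] at this
    linarith

end Chains

section Existence

variable {E : Type*} [NormedAddCommGroup E] {v : E → ℝ} {K : NNReal} {S : E × E → ℝ}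

theorem norm_sub_le_sum_norm_sub (c : ℕ → E) {k n : ℕ} (hk : k ≤ n) :
    ‖c k - c n‖ ≤ ∑ j ∈ Finset.range n, ‖c (j + 1) - c j‖ := by
  calc ‖c k - c n‖ = dist (c k) (c n) := (dist_eq_norm _ _).symm
    _ ≤ ∑ j ∈ Finset.Ico k n, dist (c j) (c (j + 1)) := dist_le_Ico_sum_dist c hk
    _ ≤ ∑ j ∈ Finset.range n, dist (c j) (c (j + 1)) :=
      Finset.sum_le_sum_of_subset_of_nonneg
        (fun j hj => Finset.mem_range.2 (Finset.mem_Ico.1 hj).2) fun _ _ _ => dist_nonneg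
    _ = ∑ j ∈ Finset.range n, ‖c (j + 1) - c j‖ :=
      Finset.sum_congr rfl fun j _ => by rw [dist_comm, dist_eq_norm]

theorem le_graphAction (hv : LipschitzWith K v) {C : ℝ}
    (hC : ∀ a b : E, (K + 1) * ‖b - a‖ - C ≤ S (a, b)) (n : ℕ) (c : ℕ → E) {k : ℕ}
    (hk : k ≤ n) : v (c n) + ‖c k - c n‖ - n * C ≤ graphAction v S n c := by
  set T := ∑ j ∈ Finset.range n, ‖c (j + 1) - c j‖
  have hv0 : v (c n) - K * T ≤ v (c 0) := by
    have h := (le_abs_self _).trans ((dist_comm _ _).trans_le (hv.dist_le_mul (c 0) (c n)))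
    rw [dist_eq_norm] at h
    nlinarith [norm_sub_le_sum_norm_sub c n.zero_le, K.coe_nonneg]
  have hS : (K + 1) * T - n * C ≤ chainAction S n c := by
    have := Finset.sum_le_sum fun j (_ : j ∈ Finset.range n) => hC (c j) (c (j + 1))
    simpa [chainAction, T, Finset.sum_sub_distrib, Finset.mul_sum] using this
  have := norm_sub_le_sum_norm_sub c hk
  rw [graphAction]
  linarith

theorem exists_isMinimalChain [ProperSpace E] (hv : LipschitzWith K v) (hS : Continuous S)
    (hsup : ∀ A : ℝ, ∃ C, ∀ a b : E, A * ‖b - a‖ - C ≤ S (a, b)) (n : ℕ) (e : E) :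
    ∃ c : ℕ → E, c n = e ∧ IsMinimalChain v S n c := by
  obtain ⟨C, hC⟩ := hsup (K + 1)
  let chain (ξ : Fin n → E) (j : ℕ) : E := if h : j < n then ξ ⟨j, h⟩ else e
  have hchain_n (ξ : Fin n → E) : chain ξ n = e := dif_neg n.lt_irrefl
  have hchain (j : ℕ) : Continuous fun ξ => chain ξ j := by
    by_cases h : j < n
    · simpa only [chain, dif_pos h] using continuous_apply _
    · simpa only [chain, dif_neg h] using continuous_const
  have hcont : Continuous fun ξ => graphAction v S n (chain ξ) :=
    (hv.continuous.comp (hchain 0)).add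
      (continuous_finsetSum _ fun j _ => hS.comp ((hchain j).prodMk (hchain (j + 1))))
  have hbdd : Bornology.IsBounded {ξ | graphAction v S n (chain ξ) ≤
      graphAction v S n (chain fun _ => e)} := by
    set R := graphAction v S n (chain fun _ => e) - v e + n * C
    refine isBounded_iff_forall_norm_le.2 ⟨‖e‖ + |R|, fun ξ hξ => ?_⟩
    refine (pi_norm_le_iff_of_nonneg (by positivity)).2 fun i => ?_
    have hξ' : graphAction v S n (chain ξ) ≤ graphAction v S n (chain fun _ => e) := hξ
    have := le_graphAction hv hC n (chain ξ) i.isLt.le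
    rw [hchain_n, show chain ξ i = ξ i from dif_pos i.isLt] at this
    linarith [norm_le_insert' (ξ i) e, le_abs_self R]
  obtain ⟨ξ, hξ⟩ := hcont.exists_forall_le_of_isBounded (fun _ => e) hbdd
  refine ⟨chain ξ, hchain_n ξ, fun c hc => ?_⟩
  have hrestrict : graphAction v S n c = graphAction v S n (chain fun i : Fin n => c i) :=
    graphAction_congr fun j hj => by
      rcases hj.lt_or_eq with hj | hj
      · simp [chain, hj]
      · rw [hj, hc]
        simp [chain]
  rw [hrestrict]
  exact hξ fun i : Fin n => c i

end Existence

section Orbits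

variable {F : Ed d × Ed d → Ed d × Ed d} {S : Ed d × Ed d → ℝ}

theorem IsGenFun.eq_of_isLocalMin_add (hFS : IsGenFun F S) (hS : Differentiable ℝ S)
    {v : Ed d → ℝ} {a p p' : Ed d} (hv : HasFDerivAt v (innerSL ℝ p') a)
    (hmin : IsLocalMin (fun x => v x + S (x, (F (a, p)).1)) a) : p' = p := by
  have hd : DifferentiableAt ℝ (fun x => S (x, (F (a, p)).1)) a := by fun_prop
  have h0 := hmin.hasFDerivAt_eq_zero (hv.add hd.hasFDerivAt)
  refine ext_inner_right ℝ fun u => ?_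
  have := congrArg (fun L => L u) h0
  simp only [add_apply, innerSL_apply_apply, hFS.dq, pairing_eq_inner, zero_apply] at this
  linarith

theorem IsGenFun.snd_eq_of_isLocalMin_add (hFS : IsGenFun F S) (hS : Differentiable ℝ S)
    {q p a p' : Ed d} (ha : (F (q, p)).1 = a)
    (hmin : IsLocalMin (fun x => S (q, x) + S (x, (F (a, p')).1)) a) : (F (q, p)).2 = p' := by
  subst ha
  have hd₁ : DifferentiableAt ℝ (fun x => S (q, x)) (F (q, p)).1 := by fun_prop
  have hd₂ : DifferentiableAt ℝ (fun x => S (x, (F ((F (q, p)).1, p')).1)) (F (q, p)).1 := by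
    fun_prop
  have h0 := hmin.hasFDerivAt_eq_zero (hd₁.hasFDerivAt.add hd₂.hasFDerivAt)
  refine ext_inner_right ℝ fun u => ?_
  have := congrArg (fun L => L u) h0
  simp only [add_apply, hFS.dq, hFS.dQ, pairing_eq_inner, zero_apply] at this
  linarith

theorem IsSymplecticTwistLift.iterate_fst_eq_of_isMinimalChain (hFS : IsSymplecticTwistLift F S)
    (hS : Differentiable ℝ S) {γ : Ed d → Ed d} {v : Ed d → ℝ}
    (hv : ∀ q, HasFDerivAt v (innerSL ℝ (γ q)) q) {n : ℕ} {c : ℕ → Ed d}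
    (hc : IsMinimalChain v S n c) {j : ℕ} (hj : j ≤ n) : (F^[j] (c 0, γ (c 0))).1 = c j := by
  choose p hp using fun j => hFS.exists_fst_eq (c j) (c (j + 1))
  have horbit : ∀ i < n, F^[i] (c 0, γ (c 0)) = (c i, p i) := by
    intro i hi
    induction i with
    | zero =>
      have := hFS.genfun.eq_of_isLocalMin_add hS (hv (c 0)) (p := p 0)
        (by rw [hp 0]; exact hc.isLocalMin_zero hi)
      rw [iterate_zero_apply, this]
    | succ i ih =>
      rw [iterate_succ_apply', ih (by omega)]
      exact Prod.ext (hp i) (hFS.genfun.snd_eq_of_isLocalMin_add hS (hp i)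
        (by rw [hp (i + 1)]; exact hc.isLocalMin_succ hi))
  rcases j with _ | i
  · rfl
  · rw [iterate_succ_apply', horbit i (by omega), hp i]

end Orbits

def orbitChain (F : Ed d × Ed d → Ed d × Ed d) (γ : Ed d → Ed d) (b : Ed d) (j : ℕ) : Ed d :=
  (F^[j] (b, γ b)).1

namespace IsPeriodicGraph

variable {F : Ed d × Ed d → Ed d × Ed d} {S : Ed d × Ed d → ℝ} {m : Fin d → ℤ} {n : ℕ}
  {γ : Ed d → Ed d}

theorem eq_orbitChain_of_isMinimalChain (hγ : IsPeriodicGraph F m n γ)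
    (hFS : IsSymplecticTwistLift F S) (hS : Differentiable ℝ S) {v : Ed d → ℝ}
    (hv : ∀ q, HasFDerivAt v (innerSL ℝ (γ q)) q) {b : Ed d} {c : ℕ → Ed d}
    (hc : IsMinimalChain v S n c) (hcn : c n = b + intVec d m) {j : ℕ} (hj : j ≤ n) :
    c j = orbitChain F γ b j := by
  have hb : c 0 = b := by
    have h := hFS.iterate_fst_eq_of_isMinimalChain hS hv hc le_rfl
    rw [hγ, hcn] at h
    exact add_right_cancel h
  rw [← hFS.iterate_fst_eq_of_isMinimalChain hS hv hc hj, hb, orbitChain]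

theorem isMinimalChain_orbitChain (hγ : IsPeriodicGraph F m n γ)
    (hFS : IsSymplecticTwistLift F S) (hpos : PositiveGenFun S) (hγc : Continuous γ)
    (hper : ZdPeriodic γ) (hLag : IsLagrangianGraph γ) (b : Ed d) :
    IsMinimalChain (potential γ) S n (orbitChain F γ b) := by
  have hv := hLag.hasFDerivAt_potential hγc
  obtain ⟨Γ, hΓ⟩ := exists_norm_le_of_periodic hγc hper
  have hK : ∀ q, ‖γ q‖₊ ≤ Γ.toNNReal := fun q => by
    rw [← NNReal.coe_le_coe, coe_nnnorm]
    exact (hΓ q).trans (Real.le_coe_toNNReal Γ)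
  obtain ⟨c, hcn, hc⟩ := exists_isMinimalChain (lipschitzWith_potential hLag hγc hK)
    hpos.1.continuous (hpos.superlinear hFS.genfun.periodic) n (b + intVec d m)
  have heq j (hj : j ≤ n) :=
    hγ.eq_orbitChain_of_isMinimalChain hFS (hpos.1.differentiable two_ne_zero) hv hc hcn hj
  intro c' hc'
  rw [← graphAction_congr heq]
  exact hc c' (hc'.trans (heq n le_rfl).symm)

end IsPeriodicGraph

/-- Proposition A.4 of the paper. Let `f` be a positive symplectic
twist map of `𝕋^d × ℝ^d` with lift `F`. Then for every `(m, n) ∈ ℤ^d × ℕ*` there is at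
most one Lipschitz Lagrangian `(m,n)`-periodic graph of `F`. -/
theorem statement14 (d : ℕ) (F : Ed d × Ed d → Ed d × Ed d) (S : Ed d × Ed d → ℝ)
    (hFS : IsSymplecticTwistLift F S) (hpos : PositiveGenFun S)
    (m : Fin d → ℤ) (n : ℕ) (hn : 0 < n) :
    ∀ γ₁ γ₂ : Ed d → Ed d,
      (∃ K : NNReal, LipschitzWith K γ₁) → ZdPeriodic γ₁ → IsLagrangianGraph γ₁ →
        IsPeriodicGraph F m n γ₁ →
      (∃ K : NNReal, LipschitzWith K γ₂) → ZdPeriodic γ₂ → IsLagrangianGraph γ₂ →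
        IsPeriodicGraph F m n γ₂ →
      γ₁ = γ₂ := by
  intro γ₁ γ₂ ⟨_, hγ₁⟩ hper₁ hLag₁ hgraph₁ ⟨_, hγ₂⟩ hper₂ hLag₂ hgraph₂
  funext b
  set X₁ := orbitChain F γ₁ b
  set X₂ := orbitChain F γ₂ b
  have hX₂ : X₂ n = b + intVec d m := congrArg Prod.fst (hgraph₂ b)
  have hX : X₂ n = X₁ n := hX₂.trans (congrArg Prod.fst (hgraph₁ b)).symm
  have h0 : X₂ 0 = X₁ 0 := rfl
  have hmin₁ : IsMinimalChain (potential γ₁) S n X₁ :=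
    hgraph₁.isMinimalChain_orbitChain hFS hpos hγ₁.continuous hper₁ hLag₁ b
  have hmin₂ : IsMinimalChain (potential γ₂) S n X₂ :=
    hgraph₂.isMinimalChain_orbitChain hFS hpos hγ₂.continuous hper₂ hLag₂ b
  have hA : chainAction S n X₂ = chainAction S n X₁ := by
    have h₁₂ := hmin₁ X₂ hX
    have h₂₁ := hmin₂ X₁ hX.symm
    rw [graphAction, graphAction, h0] at h₁₂ h₂₁
    linarith
  have hX₂min : IsMinimalChain (potential γ₁) S n X₂ := fun c hc => by
    rw [graphAction, h0, hA]
    exact hmin₁ c (hc.trans hX)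
  have h := hgraph₁.eq_orbitChain_of_isMinimalChain hFS (hpos.1.differentiable two_ne_zero)
    (hLag₁.hasFDerivAt_potential hγ₁.continuous) hX₂min hX₂ hn
  exact (hFS.eq_of_fst_eq h).symm
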